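/- Let b > 1 and P > 1, and define h : ℝ → ℝ by h(x) = b·x for x ≥ 0 and h(x) = −x for x < 0. For the two-step cost J(u₁, u₂) = h(−u₁) + h(2 − u₁ − u₂) + P·max{2, u₁, u₂} over u₁, u₂ ≥ 0, the pair (u₁, u₂) = (0, 2) is a global minimizer and the minimum value is 2·P; in particular, the optimal first-stage input can increase (from requiring u₁ = 1 when the running peak is 1 to allowing u₁ = 0 when the running peak is 2) as the running peak increases. -/
import Mathlib

/-- Asymmetric temperature penalty: `h(x) = b·x` for `x ≥ 0` and `h(x) = −x` for `x < 0`. -/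
noncomputable def asymPenalty (b x : ℝ) : ℝ :=
  if 0 ≤ x then b * x else -x

/-- Two-step cost of the peak-increase example with running peak `y = 2`:
`J(u₁, u₂) = h(−u₁) + h(2 − u₁ − u₂) + P·max{2, u₁, u₂}`. -/
noncomputable def twoStepCostPeakTwo (b P u₁ u₂ : ℝ) : ℝ :=
  asymPenalty b (-u₁) + asymPenalty b (2 - u₁ - u₂) + P * max 2 (max u₁ u₂)

/-- For `b > 1` and `P > 1`, the pair `(u₁, u₂) = (0, 2)` is a global
minimizer of `J(u₁, u₂) = h(−u₁) + h(2 − u₁ − u₂) + P·max{2, u₁, u₂}` over `u₁, u₂ ≥ 0`,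
with minimum value `2·P`. -/
theorem peak_two_optimal
    (b P : ℝ) (hb : 1 < b) (hP : 1 < P) :
    twoStepCostPeakTwo b P 0 2 = 2 * P ∧
    ∀ u₁ u₂ : ℝ, 0 ≤ u₁ → 0 ≤ u₂ →
      twoStepCostPeakTwo b P 0 2 ≤ twoStepCostPeakTwo b P u₁ u₂ := by
  have hval : twoStepCostPeakTwo b P 0 2 = 2 * P := by
    simp [twoStepCostPeakTwo, asymPenalty]
    ring
  refine ⟨hval, fun u₁ u₂ h1 h2 => ?_⟩
  rw [hval]
  have hpen1 : 0 ≤ asymPenalty b (-u₁) := by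
    unfold asymPenalty; split_ifs with h <;> nlinarith
  have hpen2 : 0 ≤ asymPenalty b (2 - u₁ - u₂) := by
    unfold asymPenalty; split_ifs with h <;> nlinarith
  have hmax : (2:ℝ) ≤ max 2 (max u₁ u₂) := le_max_left _ _
  have : 2 * P ≤ P * max 2 (max u₁ u₂) := by nlinarith
  unfold twoStepCostPeakTwo
  linarith
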